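/- For each k ≥ 1 and r ≥ 1, if G is a connected r-regular graph of order n, then the graph G' obtained by replacing each vertex of G with an independent set of size k+2 and each edge with a complete bipartite join is a connected (k+2)r-regular graph of order (k+2)n satisfying γ_{p,k}(G') = γ_t(G). -/

import Mathlib

open SimpleGraph

/-- Closed neighborhood of a set of vertices: `N[S]`. -/
def closedNbhd {V : Type*} (G : SimpleGraph V) (S : Set V) : Set V :=
  S ∪ {v | ∃ u ∈ S, G.Adj u v}

/-- The monitored sets `P^i(S)` of the k-power domination process:
`P^0(S) = N[S]`, `P^{i+1}(S) = ⋃ {N[v] : v ∈ P^i(S), |N[v] \ P^i(S)| ≤ k}`. -/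
def monitored {V : Type*} (G : SimpleGraph V) (k : ℕ) (S : Set V) : ℕ → Set V
  | 0 => closedNbhd G S
  | i + 1 => {w | ∃ v ∈ monitored G k S i,
      (closedNbhd G {v} \ monitored G k S i).ncard ≤ k ∧ w ∈ closedNbhd G {v}}

/-- `P^∞(S)`, realized as `P^{|V|}(S)` on a finite vertex type. -/
def monitoredInf {V : Type*} (G : SimpleGraph V) (k : ℕ) (S : Set V) : Set V :=
  monitored G k S (Nat.card V)

/-- `S` is a k-power dominating set. -/
def IsKPDS {V : Type*} (G : SimpleGraph V) (k : ℕ) (S : Set V) : Prop :=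
  monitoredInf G k S = Set.univ

/-- The k-power domination number `γ_{p,k}(G)`. -/
noncomputable def powerDomNumber {V : Type*} (G : SimpleGraph V) (k : ℕ) : ℕ :=
  sInf {m | ∃ S : Set V, S.Finite ∧ S.ncard = m ∧ IsKPDS G k S}

/-- A k-fort: a nonempty set `F` such that every vertex of `N(F) \ F`
has at least `k+1` neighbors in `F`. -/
def IsKFort {V : Type*} (G : SimpleGraph V) (k : ℕ) (F : Set V) : Prop :=
  F.Nonempty ∧ ∀ v ∈ closedNbhd G F \ F, k + 1 ≤ (G.neighborSet v ∩ F).ncard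

/-- Claw-free: no induced `K_{1,3}`. -/
def ClawFree {V : Type*} (G : SimpleGraph V) : Prop :=
  ∀ u a b c : V, G.Adj u a → G.Adj u b → G.Adj u c → a ≠ b → a ≠ c → b ≠ c →
    G.Adj a b ∨ G.Adj a c ∨ G.Adj b c

/-- `r`-regular. -/
def RegularOfDegree {V : Type*} (G : SimpleGraph V) (r : ℕ) : Prop :=
  ∀ v : V, (G.neighborSet v).ncard = r

/-- The domination number `γ(G)`. -/
noncomputable def domNumber {V : Type*} (G : SimpleGraph V) : ℕ :=
  sInf {m | ∃ S : Set V, S.Finite ∧ S.ncard = m ∧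
    ∀ v : V, v ∈ S ∨ ∃ u ∈ S, G.Adj v u}

/-- The total domination number `γ_t(G)`. -/
noncomputable def totalDomNumber {V : Type*} (G : SimpleGraph V) : ℕ :=
  sInf {m | ∃ S : Set V, S.Finite ∧ S.ncard = m ∧ ∀ v : V, ∃ u ∈ S, G.Adj v u}

/-- Replace each vertex of `G` by an independent set of size `m`, and each edge by a
complete bipartite join. -/
def indepExpansion {V : Type*} (G : SimpleGraph V) (m : ℕ) :
    SimpleGraph (V × Fin m) where
  Adj p p' := G.Adj p.1 p'.1
  symm := ⟨fun _ _ h => h.symm⟩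
  loopless := ⟨fun p h => G.loopless.irrefl p.1 h⟩

/-!
A total dominating set of `G`, copied into a single layer `V × {i}`, dominates all of `G'`, so
`γ_{p,k}(G') ≤ γ_t(G)`. Conversely, let `S` be a `k`-power dominating set of `G'` and call `x`
undominated if `S` has no vertex over a neighbour of `x`. If `S` met the fibre `{x} × Fin (k + 2)`
of an undominated `x` in at most one vertex, the rest of the fibre would be a `k`-fort disjoint
from `N[S]`, hence never monitored. So `S` has two vertices over each undominated `x`, and the
projection of `S` together with one neighbour of each undominated vertex is a total dominating
set of `G` with at most `|S|` elements.
-/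

open Set

/-- Keep one preimage of each point of `f '' S`; over every `b ∈ B` a second one remains. -/
lemma Set.ncard_image_add_ncard_le {α β : Type*} {f : α → β} {S : Set α} {B : Set β}
    (hS : S.Finite) (hB : ∀ b ∈ B, 1 < (S ∩ f ⁻¹' {b}).ncard) :
    (f '' S).ncard + B.ncard ≤ S.ncard := by
  obtain ⟨U, hUS, hU⟩ := exists_subset_bijOn S f
  have hBR : B ⊆ f '' (S \ U) := by
    intro b hb
    obtain ⟨a₀, ha₀S, ha₀b⟩ := nonempty_of_ncard_ne_zero (hB b hb).ne_bot
    obtain ⟨a, haU, rfl⟩ := hU.surjOn ⟨a₀, ha₀S, ha₀b⟩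
    obtain ⟨a', ⟨ha'S, ha'b⟩, ha'a⟩ := exists_ne_of_one_lt_ncard (hB _ hb) a
    exact ⟨a', ⟨ha'S, fun ha'U => ha'a (hU.injOn ha'U haU ha'b)⟩, ha'b⟩
  calc (f '' S).ncard + B.ncard ≤ U.ncard + (S \ U).ncard := by
        rw [← hU.image_eq, hU.injOn.ncard_image]
        gcongr
        exact (ncard_le_ncard hBR (hS.sdiff.image f)).trans (ncard_image_le hS.sdiff)
    _ = S.ncard := by rw [add_comm, ncard_sdiff_add_ncard_of_subset hUS hS]

lemma ncard_fst_preimage_singleton {α β : Type*} (x : α) :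
    (Prod.fst ⁻¹' {x} : Set (α × β)).ncard = Nat.card β := by
  rw [← prod_univ, ncard_prod, ncard_singleton, one_mul, ncard_univ]

section PowerDomination

variable {V : Type*} {G : SimpleGraph V} {k : ℕ} {S : Set V}

lemma monitored_succ_eq_univ {n : ℕ} (h : monitored G k S n = univ) :
    monitored G k S (n + 1) = univ := by
  refine eq_univ_of_forall fun w => ⟨w, h ▸ mem_univ w, ?_, Or.inl rfl⟩
  simp [h]

lemma isKPDS_of_closedNbhd_eq_univ (h : closedNbhd G S = univ) : IsKPDS G k S := by
  suffices ∀ n, monitored G k S n = univ from this _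
  intro n
  induction n with
  | zero => exact h
  | succ n ih => exact monitored_succ_eq_univ ih

lemma isKPDS_univ : IsKPDS G k univ :=
  isKPDS_of_closedNbhd_eq_univ (eq_univ_of_forall fun v => Or.inl (mem_univ v))

/-- A vertex adjacent to a `k`-fort sees at least `k + 1` of its vertices, so it can never
propagate into an unmonitored fort. -/
lemma disjoint_monitored_of_isKFort [Finite V] {F : Set V} (hF : IsKFort G k F)
    (hSF : Disjoint (closedNbhd G S) F) (n : ℕ) : Disjoint (monitored G k S n) F := by
  induction n with
  | zero => exact hSF
  | succ n ih =>
    refine disjoint_left.2 fun w ⟨v, hv, hcard, hw⟩ hwF => ?_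
    have hvF : v ∉ F := disjoint_left.1 ih hv
    obtain ⟨u, rfl, hvw⟩ : ∃ u ∈ ({v} : Set V), G.Adj u w :=
      hw.resolve_left fun h => hvF (h ▸ hwF)
    have hfort := hF.2 u ⟨Or.inr ⟨w, hwF, hvw.symm⟩, hvF⟩
    have hsub : G.neighborSet u ∩ F ⊆ closedNbhd G {u} \ monitored G k S n :=
      fun f hf => ⟨Or.inr ⟨u, rfl, hf.1⟩, fun hmon => disjoint_left.1 ih hmon hf.2⟩
    have hle := ncard_le_ncard hsub
    omega

lemma IsKPDS.not_disjoint_of_isKFort [Finite V] (hS : IsKPDS G k S) {F : Set V}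
    (hF : IsKFort G k F) : ¬Disjoint (closedNbhd G S) F := fun hSF => by
  obtain ⟨f, hf⟩ := hF.1
  have hdisj := disjoint_monitored_of_isKFort hF hSF (Nat.card V)
  rw [← monitoredInf, hS] at hdisj
  exact disjoint_left.1 hdisj (mem_univ f) hf

lemma exists_isKPDS_ncard_eq_powerDomNumber [Finite V] :
    ∃ S : Set V, IsKPDS G k S ∧ S.ncard = powerDomNumber G k := by
  have hne : {m | ∃ S : Set V, S.Finite ∧ S.ncard = m ∧ IsKPDS G k S}.Nonempty :=
    ⟨_, univ, toFinite _, rfl, isKPDS_univ⟩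
  obtain ⟨S, -, hcard, hS⟩ := Nat.sInf_mem hne
  exact ⟨S, hS, hcard⟩

lemma powerDomNumber_le [Finite V] (hS : IsKPDS G k S) : powerDomNumber G k ≤ S.ncard :=
  Nat.sInf_le ⟨S, toFinite S, rfl, hS⟩

end PowerDomination

section TotalDomination

variable {V : Type*} {G : SimpleGraph V}

def IsTotalDominating (G : SimpleGraph V) (T : Set V) : Prop :=
  ∀ v, ∃ u ∈ T, G.Adj v u

lemma totalDomNumber_le [Finite V] {T : Set V} (hT : IsTotalDominating G T) :
    totalDomNumber G ≤ T.ncard :=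
  Nat.sInf_le ⟨T, toFinite T, rfl, hT⟩

lemma exists_isTotalDominating_ncard_eq_totalDomNumber [Finite V]
    (hdeg : ∀ v, ∃ w, G.Adj v w) :
    ∃ T : Set V, IsTotalDominating G T ∧ T.ncard = totalDomNumber G := by
  have hne : {m | ∃ T : Set V, T.Finite ∧ T.ncard = m ∧ IsTotalDominating G T}.Nonempty :=
    ⟨_, univ, toFinite _, rfl, fun v => (hdeg v).imp fun w hw => ⟨mem_univ w, hw⟩⟩
  obtain ⟨T, -, hcard, hT⟩ := Nat.sInf_mem hne
  exact ⟨T, hT, hcard⟩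

/-- Adding one neighbour of every vertex not dominated by `D` totally dominates. -/
lemma exists_isTotalDominating_ncard_le_add [Finite V] (hdeg : ∀ v, ∃ w, G.Adj v w)
    (D : Set V) :
    ∃ T : Set V, IsTotalDominating G T ∧
      T.ncard ≤ D.ncard + {x | ∀ d ∈ D, ¬G.Adj x d}.ncard := by
  choose nbr hnbr using hdeg
  refine ⟨D ∪ nbr '' {x | ∀ d ∈ D, ¬G.Adj x d}, fun v => ?_, ?_⟩
  · by_cases hv : ∃ d ∈ D, G.Adj v d
    · obtain ⟨d, hd, hvd⟩ := hv
      exact ⟨d, Or.inl hd, hvd⟩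
    · exact ⟨nbr v, Or.inr ⟨v, fun d hd hvd => hv ⟨d, hd, hvd⟩, rfl⟩, hnbr v⟩
  · exact (ncard_union_le _ _).trans (Nat.add_le_add_left ncard_image_le _)

end TotalDomination

section IndepExpansion

variable {V : Type*} {G : SimpleGraph V} {m : ℕ}

lemma indepExpansion_neighborSet (p : V × Fin m) :
    (indepExpansion G m).neighborSet p = G.neighborSet p.1 ×ˢ univ := by
  ext q
  simp [indepExpansion]

lemma indepExpansion_regularOfDegree {r : ℕ} (h : RegularOfDegree G r) :
    RegularOfDegree (indepExpansion G m) (m * r) := fun p => by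
  rw [indepExpansion_neighborSet, ncard_prod, h, ncard_univ, Nat.card_fin, mul_comm]

/-- Each layer `V × {i}` is a copy of `G`, and two copies of `v` are joined through a copy of
any neighbour of `v`. -/
lemma indepExpansion_reachable (hdeg : ∀ v, ∃ w, G.Adj v w) {u v : V} (h : G.Reachable u v)
    (i j : Fin m) : (indepExpansion G m).Reachable (u, i) (v, j) := by
  obtain ⟨w, hvw⟩ := hdeg v
  have hlayer : (indepExpansion G m).Reachable (u, i) (v, i) :=
    h.map ⟨fun x => (x, i), id⟩
  have hvw' : (indepExpansion G m).Adj (v, i) (w, i) := hvw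
  have hwv' : (indepExpansion G m).Adj (w, i) (v, j) := hvw.symm
  exact hlayer.trans (hvw'.reachable.trans hwv'.reachable)

lemma indepExpansion_connected [NeZero m] (hG : G.Connected) (hdeg : ∀ v, ∃ w, G.Adj v w) :
    (indepExpansion G m).Connected :=
  have := hG.nonempty
  ⟨fun p q => indepExpansion_reachable hdeg (hG.preconnected p.1 q.1) p.2 q.2⟩

variable {k : ℕ} {S : Set (V × Fin m)} {x : V}

lemma disjoint_closedNbhd_fiber_sdiff (hx : ∀ s ∈ S, ¬G.Adj x s.1) :
    Disjoint (closedNbhd (indepExpansion G m) S) (Prod.fst ⁻¹' {x} \ S) := by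
  refine disjoint_left.2 ?_
  rintro p (hpS | ⟨s, hs, hsp⟩) ⟨hpx, hpS'⟩
  · exact hpS' hpS
  · exact hx s hs ((show p.1 = x from hpx) ▸ hsp.symm)

lemma isKFort_fiber_sdiff (hcard : k + 1 ≤ (Prod.fst ⁻¹' {x} \ S).ncard) :
    IsKFort (indepExpansion G m) k (Prod.fst ⁻¹' {x} \ S) := by
  refine ⟨nonempty_of_ncard_ne_zero (by omega), ?_⟩
  rintro v ⟨hvF | ⟨f, hf, hfv⟩, hvF'⟩
  · exact absurd hvF hvF'
  · have hvx : G.Adj v.1 x := (show f.1 = x from hf.1) ▸ hfv.symm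
    have hFnbr : Prod.fst ⁻¹' {x} \ S ⊆ (indepExpansion G m).neighborSet v :=
      fun g hg => show G.Adj v.1 g.1 from (show g.1 = x from hg.1) ▸ hvx
    rwa [inter_eq_right.2 hFnbr]

lemma IsKPDS.lt_add_ncard_inter_fiber [Finite V] (hS : IsKPDS (indepExpansion G m) k S)
    (hx : ∀ s ∈ S, ¬G.Adj x s.1) : m < k + 1 + (S ∩ Prod.fst ⁻¹' {x}).ncard := by
  by_contra! hle
  have hcard : (S ∩ Prod.fst ⁻¹' {x}).ncard + (Prod.fst ⁻¹' {x} \ S).ncard = m := by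
    rw [inter_comm, ncard_inter_add_ncard_sdiff_eq_ncard, ncard_fst_preimage_singleton,
      Nat.card_fin]
  exact hS.not_disjoint_of_isKFort (isKFort_fiber_sdiff (by omega))
    (disjoint_closedNbhd_fiber_sdiff hx)

lemma isKPDS_indepExpansion_image {T : Set V} (hT : IsTotalDominating G T) (i : Fin m) :
    IsKPDS (indepExpansion G m) k ((·, i) '' T) := by
  refine isKPDS_of_closedNbhd_eq_univ (eq_univ_of_forall fun p => Or.inr ?_)
  obtain ⟨u, hu, hpu⟩ := hT p.1
  exact ⟨(u, i), mem_image_of_mem _ hu, hpu.symm⟩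

end IndepExpansion

section IndepExpansionDomination

variable {V : Type*} [Finite V] {G : SimpleGraph V} {k : ℕ}

lemma IsKPDS.exists_isTotalDominating_ncard_le (hdeg : ∀ v, ∃ w, G.Adj v w)
    {S : Set (V × Fin (k + 2))} (hS : IsKPDS (indepExpansion G (k + 2)) k S) :
    ∃ T : Set V, IsTotalDominating G T ∧ T.ncard ≤ S.ncard := by
  obtain ⟨T, hT, hTcard⟩ := exists_isTotalDominating_ncard_le_add hdeg (Prod.fst '' S)
  refine ⟨T, hT, hTcard.trans (ncard_image_add_ncard_le (toFinite S) fun x hx => ?_)⟩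
  have := hS.lt_add_ncard_inter_fiber fun s hs => hx s.1 (mem_image_of_mem _ hs)
  omega

lemma powerDomNumber_indepExpansion_le {m : ℕ} [NeZero m] (hdeg : ∀ v, ∃ w, G.Adj v w) :
    powerDomNumber (indepExpansion G m) k ≤ totalDomNumber G := by
  obtain ⟨T, hT, hTcard⟩ := exists_isTotalDominating_ncard_eq_totalDomNumber hdeg
  calc powerDomNumber (indepExpansion G m) k ≤ ((·, (0 : Fin m)) '' T).ncard :=
        powerDomNumber_le (isKPDS_indepExpansion_image hT 0)
    _ = totalDomNumber G := by
        rw [ncard_image_of_injective T (Prod.mk_left_injective 0), hTcard]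

lemma totalDomNumber_le_powerDomNumber_indepExpansion (hdeg : ∀ v, ∃ w, G.Adj v w) :
    totalDomNumber G ≤ powerDomNumber (indepExpansion G (k + 2)) k := by
  obtain ⟨S, hS, hScard⟩ :=
    exists_isKPDS_ncard_eq_powerDomNumber (G := indepExpansion G (k + 2)) (k := k)
  obtain ⟨T, hT, hTS⟩ := hS.exists_isTotalDominating_ncard_le hdeg
  exact (totalDomNumber_le hT).trans (hTS.trans hScard.le)

end IndepExpansionDomination

theorem indepExpansion_powerDomNumber_general {V : Type*} [Finite V] (G : SimpleGraph V)
    (k r : ℕ) (hr : 1 ≤ r) (hconn : G.Connected)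
    (hreg : RegularOfDegree G r) :
    (indepExpansion G (k + 2)).Connected ∧
    RegularOfDegree (indepExpansion G (k + 2)) ((k + 2) * r) ∧
    Nat.card (V × Fin (k + 2)) = (k + 2) * Nat.card V ∧
    powerDomNumber (indepExpansion G (k + 2)) k = totalDomNumber G := by
  have hdeg : ∀ v, ∃ w, G.Adj v w := fun v =>
    nonempty_of_ncard_ne_zero (s := G.neighborSet v) (by rw [hreg v]; omega)
  exact ⟨indepExpansion_connected hconn hdeg, indepExpansion_regularOfDegree hreg,
    by rw [Nat.card_prod, Nat.card_fin, mul_comm],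
    (powerDomNumber_indepExpansion_le hdeg).antisymm
      (totalDomNumber_le_powerDomNumber_indepExpansion hdeg)⟩

theorem indepExpansion_powerDomNumber {V : Type*} [Finite V] (G : SimpleGraph V)
    (k r : ℕ) (hk : 1 ≤ k) (hr : 1 ≤ r) (hconn : G.Connected)
    (hreg : RegularOfDegree G r) :
    (indepExpansion G (k + 2)).Connected ∧
    RegularOfDegree (indepExpansion G (k + 2)) ((k + 2) * r) ∧
    Nat.card (V × Fin (k + 2)) = (k + 2) * Nat.card V ∧
    powerDomNumber (indepExpansion G (k + 2)) k = totalDomNumber G :=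
  indepExpansion_powerDomNumber_general G k r hr hconn hreg
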